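/- arXiv:math-ph/0508056 — 2 statements merged into one kernel-verified Lean document; each statement's English description precedes it below -/
import Mathlib

section
/- For all integers m, k ≥ 0, ∫_0^∞ ψ⁰_{2m+1}(x) ψ⁰_{2k}(x) dx = ψ⁰_{2k}(0) · (ψ⁰_{2m+1})′(0) / (2(2(m−k)+1)) = (1/√(2π)) · (−1)^{m−k} √((2m+1) E_m E_k) / (2(m−k)+1). -/
open MeasureTheory Filter Finset

/-- `E_m = (2m)! / (2^(2m) (m!)^2)`. -/
noncomputable def Ecoef (m : ℕ) : ℝ :=
  (Nat.factorial (2*m)) / (2^(2*m) * (Nat.factorial m)^2)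

/-- The `n`-th physicists' Hermite polynomial, `H_n(x) = (-1)^n e^{x²} (d/dx)^n e^{-x²}`. -/
noncomputable def hermiteH (n : ℕ) (x : ℝ) : ℝ :=
  (-1)^n * Real.exp (x^2) * (deriv^[n] (fun t : ℝ => Real.exp (-t^2))) x

/-- The `n`-th `L²(ℝ)`-normalized Hermite function
`ψ⁰_n(x) = (2^n n! √π)^{-1/2} H_n(x) e^{-x²/2}`. -/
noncomputable def psi0 (n : ℕ) (x : ℝ) : ℝ :=
  (1 / Real.sqrt (2^n * (Nat.factorial n : ℝ) * Real.sqrt Real.pi)) *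
    hermiteH n x * Real.exp (-x^2/2)

open Polynomial

noncomputable def Hpoly : ℕ → Polynomial ℝ
  | 0 => 1
  | n+1 => C 2 * X * Hpoly n - derivative (Hpoly n)

lemma iterDeriv_gauss (n : ℕ) :
    deriv^[n] (fun t : ℝ => Real.exp (-t^2)) =
      fun x => (-1)^n * (Hpoly n).eval x * Real.exp (-x^2) := by
  induction n with
  | zero => funext x; simp [Hpoly]
  | succ n ih =>
    rw [Function.iterate_succ_apply', ih]
    funext x
    have h1 : HasDerivAt (fun x : ℝ => (-1:ℝ)^n * (Hpoly n).eval x * Real.exp (-x^2))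
        ((-1)^n * ((derivative (Hpoly n)).eval x * Real.exp (-x^2) +
          (Hpoly n).eval x * (Real.exp (-x^2) * (-2*x)))) x := by
      have hp := (Hpoly n).hasDerivAt x
      have he : HasDerivAt (fun x : ℝ => Real.exp (-x^2)) (Real.exp (-x^2) * (-2*x)) x := by
        have : HasDerivAt (fun x : ℝ => -x^2) (-2*x) x := by
          simpa using ((hasDerivAt_pow 2 x).fun_neg)
        simpa using this.exp
      simpa [mul_assoc] using ((hp.mul he).const_mul ((-1:ℝ)^n))
    rw [h1.deriv]
    show _ = (-1)^(n+1) * (Hpoly (n+1)).eval x * Real.exp (-x^2)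
    simp only [Hpoly, eval_sub, eval_mul, eval_C, eval_X, pow_succ]
    ring

lemma hermiteH_eq (n : ℕ) (x : ℝ) : hermiteH n x = (Hpoly n).eval x := by
  rw [hermiteH, iterDeriv_gauss]
  rw [show (-1:ℝ)^n * Real.exp (x^2) * ((-1)^n * (Hpoly n).eval x * Real.exp (-x^2))
    = ((-1)^n)^2 * (Hpoly n).eval x * (Real.exp (x^2) * Real.exp (-x^2)) by ring]
  rw [← Real.exp_add]
  simp [← pow_mul, pow_mul']

lemma Hpoly_deriv (n : ℕ) :
    derivative (Hpoly (n+1)) = C (2*(n+1) : ℝ) * Hpoly n := by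
  induction n with
  | zero => simp [Hpoly]
  | succ n ih =>
    have hs : Hpoly (n+1+1) = C 2 * X * Hpoly (n+1) - derivative (Hpoly (n+1)) := rfl
    have hs' : Hpoly (n+1) = C 2 * X * Hpoly n - derivative (Hpoly n) := rfl
    rw [hs, derivative_sub, derivative_mul, derivative_mul, ih, derivative_mul]
    rw [hs']
    simp only [derivative_C, derivative_X, derivative_ofNat, derivative_one, derivative_add,
      derivative_mul, map_mul, map_add, map_one, map_ofNat, Nat.cast_add, Nat.cast_one]
    ring

lemma Hpoly_ode (n : ℕ) :
    derivative (derivative (Hpoly n)) =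
      C 2 * X * derivative (Hpoly n) - C (2*n : ℝ) * Hpoly n := by
  have h : Hpoly (n+1) = C 2 * X * Hpoly n - derivative (Hpoly n) := rfl
  have hd := Hpoly_deriv n
  rw [h, derivative_sub, derivative_mul, derivative_mul] at hd
  simp only [derivative_C, derivative_X, derivative_ofNat, derivative_one, derivative_add,
    derivative_mul, map_mul, map_add, map_one, map_ofNat, Nat.cast_add, Nat.cast_one] at hd ⊢
  linear_combination -hd

lemma Hpoly_odd_zero (m : ℕ) : (Hpoly (2*m+1)).eval 0 = 0 := by
  induction m with
  | zero => simp [Hpoly]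
  | succ m ih =>
    have h : Hpoly (2*(m+1)+1) = C 2 * X * Hpoly (2*m+2) - derivative (Hpoly (2*m+2)) := rfl
    rw [h, show (2*m+2) = (2*m+1)+1 from rfl, Hpoly_deriv (2*m+1)]
    simp only [eval_sub, eval_mul, eval_C, eval_X, mul_zero, zero_mul, zero_sub]
    rw [ih]; ring

lemma Hpoly_even_zero (k : ℕ) :
    (Hpoly (2*k)).eval 0 = (-1)^k * (Nat.factorial (2*k) : ℝ) / (Nat.factorial k : ℝ) := by
  induction k with
  | zero => simp [Hpoly]
  | succ k ih =>
    have h : Hpoly (2*(k+1)) = C 2 * X * Hpoly (2*k+1) - derivative (Hpoly (2*k+1)) := rfl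
    rw [h, Hpoly_deriv (2*k)]
    simp only [eval_sub, eval_mul, eval_C, eval_X, mul_zero, zero_mul, zero_sub]
    rw [ih]
    have hk : (Nat.factorial k : ℝ) ≠ 0 := Nat.cast_ne_zero.mpr (Nat.factorial_ne_zero k)
    have hfac : (Nat.factorial (2*(k+1)) : ℝ) =
        (2*(k:ℝ)+2) * ((2*k+1) * Nat.factorial (2*k)) := by
      rw [show 2*(k+1) = (2*k+1)+1 by ring]
      push_cast [Nat.factorial_succ]
      ring
    have hfk : (Nat.factorial (k+1) : ℝ) = ((k:ℝ)+1) * Nat.factorial k := by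
      push_cast [Nat.factorial_succ]; ring
    rw [hfac, hfk]
    have hk1 : ((k:ℝ)+1) ≠ 0 := by positivity
    push_cast
    field_simp
    ring

noncomputable def hc (n : ℕ) : ℝ :=
  1 / Real.sqrt (2^n * (Nat.factorial n : ℝ) * Real.sqrt Real.pi)

lemma psi0_eq (n : ℕ) (x : ℝ) :
    psi0 n x = hc n * (Hpoly n).eval x * Real.exp (-x^2/2) := by
  rw [psi0, hermiteH_eq, hc]

noncomputable def psi0' (n : ℕ) (x : ℝ) : ℝ :=
  hc n * ((derivative (Hpoly n)).eval x - x * (Hpoly n).eval x) * Real.exp (-x^2/2)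

lemma hasDerivAt_gauss_half (x : ℝ) :
    HasDerivAt (fun x : ℝ => Real.exp (-x^2/2)) (Real.exp (-x^2/2) * (-x)) x := by
  have h : HasDerivAt (fun x : ℝ => -x^2/2) (-x) x := by
    have := ((hasDerivAt_pow 2 x).fun_neg).div_const 2
    refine this.congr_deriv ?_ <;> ring
  simpa using h.exp

lemma hasDerivAt_psi0 (n : ℕ) (x : ℝ) :
    HasDerivAt (psi0 n) (psi0' n x) x := by
  have hp := (Hpoly n).hasDerivAt x
  have h := ((hp.fun_mul (hasDerivAt_gauss_half x)).const_mul (hc n))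
  have heq : (fun x => hc n * ((Hpoly n).eval x * Real.exp (-x^2/2))) = psi0 n := by
    funext y; rw [psi0_eq]; ring
  rw [heq] at h
  refine h.congr_deriv ?_
  rw [psi0']; ring

lemma deriv_psi0 (n : ℕ) (x : ℝ) : deriv (psi0 n) x = psi0' n x :=
  (hasDerivAt_psi0 n x).deriv

lemma hasDerivAt_psi0' (n : ℕ) (x : ℝ) :
    HasDerivAt (psi0' n) ((x^2 - (2*n+1)) * psi0 n x) x := by
  have hg : HasDerivAt (fun x : ℝ => (derivative (Hpoly n)).eval x - x * (Hpoly n).eval x)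
      ((derivative (derivative (Hpoly n))).eval x
        - (1 * (Hpoly n).eval x + x * (derivative (Hpoly n)).eval x)) x :=
    ((Hpoly n).derivative.hasDerivAt x).sub
      ((hasDerivAt_id x).mul ((Hpoly n).hasDerivAt x))
  have h := (hg.fun_mul (hasDerivAt_gauss_half x)).const_mul (hc n)
  have heq : (fun x => hc n * (((derivative (Hpoly n)).eval x - x * (Hpoly n).eval x)
      * Real.exp (-x^2/2))) = psi0' n := by
    funext y; rw [psi0']; ring
  rw [heq] at h
  refine h.congr_deriv ?_
  have hode : (derivative (derivative (Hpoly n))).eval x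
      = 2 * x * (derivative (Hpoly n)).eval x - 2*n * (Hpoly n).eval x := by
    rw [Hpoly_ode]; simp
  rw [psi0_eq, hode]; ring

lemma tendsto_pow_gauss (i : ℕ) :
    Tendsto (fun x : ℝ => x^i * Real.exp (-x^2)) atTop (nhds 0) := by
  apply squeeze_zero' (g := fun x : ℝ => x^i * Real.exp (-x))
  · filter_upwards [eventually_ge_atTop (1:ℝ)] with x hx
    positivity
  · filter_upwards [eventually_ge_atTop (1:ℝ)] with x hx
    have hxx : -x^2 ≤ -x := by nlinarith
    exact mul_le_mul_of_nonneg_left (Real.exp_le_exp.mpr hxx) (by positivity)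
  · exact Real.tendsto_pow_mul_exp_neg_atTop_nhds_zero i

lemma tendsto_poly_gauss (Q : Polynomial ℝ) :
    Tendsto (fun x : ℝ => Q.eval x * Real.exp (-x^2)) atTop (nhds 0) := by
  have heq : (fun x : ℝ => Q.eval x * Real.exp (-x^2)) =
      fun x => ∑ i ∈ range (Q.natDegree+1), Q.coeff i * (x^i * Real.exp (-x^2)) := by
    funext x
    rw [Polynomial.eval_eq_sum_range, Finset.sum_mul]
    congr 1; funext i; ring
  rw [heq]
  have := tendsto_finset_sum (range (Q.natDegree+1))
    (fun i _ => (tendsto_pow_gauss i).const_mul (Q.coeff i))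
  simpa using this

lemma integrableOn_poly_gauss (Q : Polynomial ℝ) :
    IntegrableOn (fun x : ℝ => Q.eval x * Real.exp (-x^2)) (Set.Ioi 0) := by
  have h1 : ∀ i : ℕ, IntegrableOn (fun x : ℝ => x^i * Real.exp (-x^2)) (Set.Ioi 0) := by
    intro i
    have := integrableOn_rpow_mul_exp_neg_mul_sq (b := 1) one_pos
      (s := (i:ℝ)) (lt_of_lt_of_le neg_one_lt_zero (Nat.cast_nonneg i))
    simpa [Real.rpow_natCast] using this
  have h2 : IntegrableOn (fun x : ℝ =>
      ∑ i ∈ range (Q.natDegree+1), Q.coeff i * (x^i * Real.exp (-x^2))) (Set.Ioi 0) :=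
    integrable_finset_sum _ (fun i _ => (h1 i).const_mul _)
  apply h2.congr_fun _ measurableSet_Ioi
  intro x _
  show _ = Q.eval x * Real.exp (-x^2)
  rw [Polynomial.eval_eq_sum_range, Finset.sum_mul]
  exact Finset.sum_congr rfl (fun i _ => by ring)

lemma prod_psi0_eq (a b : ℕ) (x : ℝ) :
    psi0 a x * psi0 b x =
      (C (hc a * hc b) * (Hpoly a * Hpoly b)).eval x * Real.exp (-x^2) := by
  rw [psi0_eq, psi0_eq]
  simp only [eval_mul, eval_C]
  rw [show Real.exp (-x^2) = Real.exp (-x^2/2) * Real.exp (-x^2/2) by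
    rw [← Real.exp_add]; ring_nf]
  ring

lemma wronskian_eq (a b : ℕ) (x : ℝ) :
    psi0' a x * psi0 b x - psi0 a x * psi0' b x =
      (C (hc a * hc b) * (derivative (Hpoly a) * Hpoly b
        - Hpoly a * derivative (Hpoly b))).eval x * Real.exp (-x^2) := by
  rw [psi0_eq, psi0_eq, psi0', psi0']
  simp only [eval_mul, eval_C, eval_sub]
  rw [show Real.exp (-x^2) = Real.exp (-x^2/2) * Real.exp (-x^2/2) by
    rw [← Real.exp_add]; ring_nf]
  ring

lemma key_integral (a b : ℕ) :
    (2*(b:ℝ) - 2*(a:ℝ)) * ∫ x in Set.Ioi (0:ℝ), psi0 a x * psi0 b x =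
      -(psi0' a 0 * psi0 b 0 - psi0 a 0 * psi0' b 0) := by
  set W : ℝ → ℝ := fun x => psi0' a x * psi0 b x - psi0 a x * psi0' b x with hW
  have hderiv : ∀ x ∈ Set.Ici (0:ℝ), HasDerivAt W
      ((2*(b:ℝ) - 2*(a:ℝ)) * (psi0 a x * psi0 b x)) x := by
    intro x _
    have h := ((hasDerivAt_psi0' a x).fun_mul (hasDerivAt_psi0 b x)).fun_sub
      ((hasDerivAt_psi0 a x).fun_mul (hasDerivAt_psi0' b x))
    refine h.congr_deriv ?_
    ring
  have hint : IntegrableOn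
      (fun x => (2*(b:ℝ) - 2*(a:ℝ)) * (psi0 a x * psi0 b x)) (Set.Ioi (0:ℝ)) := by
    have h2 : IntegrableOn (fun x => (2*(b:ℝ) - 2*(a:ℝ)) *
        ((C (hc a * hc b) * (Hpoly a * Hpoly b)).eval x * Real.exp (-x^2)))
        (Set.Ioi (0:ℝ)) :=
      (integrableOn_poly_gauss (C (hc a * hc b) * (Hpoly a * Hpoly b))).const_mul
        (2*(b:ℝ) - 2*(a:ℝ))
    apply h2.congr_fun _ measurableSet_Ioi
    intro x _
    show _ = (2*(b:ℝ) - 2*(a:ℝ)) * (psi0 a x * psi0 b x)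
    rw [prod_psi0_eq]
  have htend : Tendsto W atTop (nhds 0) := by
    have heq : W = fun x => (C (hc a * hc b) * (derivative (Hpoly a) * Hpoly b
        - Hpoly a * derivative (Hpoly b))).eval x * Real.exp (-x^2) := by
      funext x; exact wronskian_eq a b x
    rw [heq]
    exact tendsto_poly_gauss _
  have := integral_Ioi_of_hasDerivAt_of_tendsto' hderiv hint htend
  rw [MeasureTheory.integral_const_mul] at this
  rw [this]; ring

/-- For all `m, k ≥ 0`,
`∫_0^∞ ψ⁰_{2m+1} ψ⁰_{2k} = ψ⁰_{2k}(0)·(ψ⁰_{2m+1})'(0) / (2(2(m-k)+1))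
                        = (1/√(2π))·(-1)^{m-k}·√((2m+1) E_m E_k) / (2(m-k)+1)`. -/
theorem stmt10 (m k : ℕ) :
    (∫ x in Set.Ioi (0:ℝ), psi0 (2*m+1) x * psi0 (2*k) x) =
      psi0 (2*k) 0 * deriv (psi0 (2*m+1)) 0 / (2*(2*((((m:ℤ)-(k:ℤ)):ℤ):ℝ)+1)) ∧
    (∫ x in Set.Ioi (0:ℝ), psi0 (2*m+1) x * psi0 (2*k) x) =
      (1 / Real.sqrt (2*Real.pi)) * (-1:ℝ)^((m:ℤ)-(k:ℤ)) *
        Real.sqrt ((2*(m:ℝ)+1) * Ecoef m * Ecoef k) / (2*((((m:ℤ)-(k:ℤ)):ℤ):ℝ)+1) := by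
  have hdmk : ((((m:ℤ)-(k:ℤ)):ℤ):ℝ) = (m:ℝ) - (k:ℝ) := by push_cast; ring
  set d : ℝ := ((((m:ℤ)-(k:ℤ)):ℤ):ℝ) with hd
  have h2d : 2*d+1 ≠ 0 := by
    have hz : (2*((m:ℤ)-(k:ℤ))+1 : ℤ) ≠ 0 := by omega
    have : ((2*((m:ℤ)-(k:ℤ))+1 : ℤ) : ℝ) = 2*d+1 := by push_cast [hd]; ring
    rw [← this]
    exact_mod_cast hz
  have hval : (∫ x in Set.Ioi (0:ℝ), psi0 (2*m+1) x * psi0 (2*k) x)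
      = psi0 (2*k) 0 * psi0' (2*m+1) 0 / (2*(2*d+1)) := by
    have hk := key_integral (2*m+1) (2*k)
    have hzero : psi0 (2*m+1) 0 = 0 := by rw [psi0_eq, Hpoly_odd_zero]; ring
    rw [hzero] at hk
    have hcoef : (2*((2*k:ℕ):ℝ) - 2*((2*m+1:ℕ):ℝ)) = -(2*(2*d+1)) := by
      push_cast [hdmk]; ring
    rw [hcoef] at hk
    field_simp
    linear_combination -hk
  refine ⟨by rw [hval, deriv_psi0], ?_⟩
  rw [hval]
  -- abbreviations
  set sa : ℝ := Real.sqrt (Nat.factorial (2*k) : ℝ) with hsa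
  set sb : ℝ := Real.sqrt (Nat.factorial (2*m) : ℝ) with hsb
  set sc : ℝ := Real.sqrt (2*(m:ℝ)+1) with hsc
  set s2p : ℝ := Real.sqrt (2*Real.pi) with hs2p
  have e1 : (Nat.factorial (2*k) : ℝ) = sa^2 :=
    (Real.sq_sqrt (Nat.cast_nonneg _)).symm
  have e2 : (Nat.factorial (2*m) : ℝ) = sb^2 :=
    (Real.sq_sqrt (Nat.cast_nonneg _)).symm
  have e3 : (2*(m:ℝ)+1) = sc^2 := (Real.sq_sqrt (by positivity)).symm
  have hsa0 : 0 < sa := Real.sqrt_pos.mpr (by exact_mod_cast (Nat.factorial_pos _))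
  have hsb0 : 0 < sb := Real.sqrt_pos.mpr (by exact_mod_cast (Nat.factorial_pos _))
  have hsc0 : 0 < sc := Real.sqrt_pos.mpr (by positivity)
  have hs2p0 : 0 < s2p := Real.sqrt_pos.mpr (by positivity)
  have hFk : (Nat.factorial k : ℝ) ≠ 0 := Nat.cast_ne_zero.mpr (Nat.factorial_ne_zero k)
  have hFm : (Nat.factorial m : ℝ) ≠ 0 := Nat.cast_ne_zero.mpr (Nat.factorial_ne_zero m)
  -- value of psi0 (2k) at 0
  have hb0 : psi0 (2*k) 0 = hc (2*k) * ((-1)^k * sa^2 / (Nat.factorial k : ℝ)) := by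
    rw [psi0_eq, Hpoly_even_zero, ← e1]
    norm_num
  -- value of psi0' (2m+1) at 0
  have ha0 : psi0' (2*m+1) 0 = hc (2*m+1) * (2 * sc^2 * ((-1)^m * sb^2 / (Nat.factorial m : ℝ))) := by
    rw [psi0', Hpoly_deriv (2*m), eval_mul, eval_C, Hpoly_even_zero, ← e2]
    have h5 : (2*(((2*m:ℕ):ℝ)+1)) = 2*sc^2 := by rw [← e3]; push_cast; ring
    rw [h5]
    norm_num
  -- product of normalization constants
  have hcc : hc (2*k) * hc (2*m+1) = 1 / (2^(m+k) * sa * sb * sc * s2p) := by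
    rw [hc, hc]
    rw [div_mul_div_comm, one_mul, ← Real.sqrt_mul (by positivity)]
    have harg : (2^(2*k) * (Nat.factorial (2*k) : ℝ) * Real.sqrt Real.pi) *
        (2^(2*m+1) * (Nat.factorial (2*m+1) : ℝ) * Real.sqrt Real.pi)
        = (2^(m+k) * sa * sb * sc)^2 * (2*Real.pi) := by
      have hpi : Real.sqrt Real.pi * Real.sqrt Real.pi = Real.pi :=
        Real.mul_self_sqrt Real.pi_nonneg
      have hf : (Nat.factorial (2*m+1) : ℝ) = (2*(m:ℝ)+1) * (Nat.factorial (2*m):ℝ) := by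
        rw [show 2*m+1 = (2*m)+1 from rfl, Nat.factorial_succ]
        push_cast; ring
      rw [hf, e1, e2, e3]
      linear_combination (2^(2*k) * 2^(2*m+1) * sa^2 * sb^2 * sc^2) * hpi
    rw [harg, Real.sqrt_mul (sq_nonneg _), Real.sqrt_sq (by positivity), ← hs2p]
  have hzpow : (-1:ℝ)^((m:ℤ)-(k:ℤ)) = (-1)^m * (-1)^k := by
    rw [zpow_sub₀ (by norm_num : (-1:ℝ) ≠ 0), zpow_natCast, zpow_natCast]
    have h4 : ((-1:ℝ)^k) * ((-1:ℝ)^k) = 1 := by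
      rw [← pow_add, ← two_mul, pow_mul]; norm_num
    rw [div_eq_mul_inv, inv_eq_of_mul_eq_one_right h4]
  have hsqE : Real.sqrt ((2*(m:ℝ)+1) * Ecoef m * Ecoef k)
      = sc*sb*sa/(2^(m+k) * (Nat.factorial m : ℝ) * (Nat.factorial k : ℝ)) := by
    have harg2 : (2*(m:ℝ)+1) * Ecoef m * Ecoef k
        = (sc*sb*sa/(2^(m+k) * (Nat.factorial m : ℝ) * (Nat.factorial k : ℝ)))^2 := by
      rw [Ecoef, Ecoef, e1, e2, e3]
      field_simp
      ring
    rw [harg2, Real.sqrt_sq (by positivity)]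
  have hL : hc (2*k) * ((-1)^k * sa^2 / (Nat.factorial k : ℝ))
      * (hc (2*m+1) * (2*sc^2*((-1)^m*sb^2/(Nat.factorial m : ℝ))))
      = (hc (2*k) * hc (2*m+1)) *
        (2 * (-1)^k * (-1)^m * sa^2 * sb^2 * sc^2
          / ((Nat.factorial k : ℝ) * (Nat.factorial m : ℝ))) := by
    ring
  rw [hb0, ha0, hL, hcc, hzpow, hsqE]
  have hpow : (2:ℝ)^(m+k) ≠ 0 := pow_ne_zero _ two_ne_zero
  field_simp
end

section
/- The limit lim_{k→∞} ∑_{n=0}^{k} ∑_{m=k+1}^{∞} 1 / ( √(n+1) · √(m+1) · (n − m) ) exists and equals −π²/2. (For each fixed k the inner series over m converges absolutely, and the double sum equals the Riemann-sum approximation of ∫_0^1 ∫_1^∞ dx dy / (√(xy)(x − y)) = −π²/2.) -/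
open MeasureTheory Filter Finset

namespace Stmt19
noncomputable section

/-- inner integrand; `x` will be `n+1`. -/
def w (x y : ℝ) : ℝ := 1 / (Real.sqrt y * (y - x))

/-- antiderivative of `w (a^2)` -/
def F (a y : ℝ) : ℝ := (Real.log (Real.sqrt y - a) - Real.log (Real.sqrt y + a)) / a

def Lam (u : ℝ) : ℝ := Real.log (1 + u) - Real.log (1 - u)

/-- summable comparison series -/
lemma summable_comp : Summable (fun j : ℕ => 1 / (Real.sqrt ((j:ℝ)+1) * ((j:ℝ)+1))) := by
  have h : Summable (fun j : ℕ => 1 / ((j:ℝ)) ^ ((3:ℝ)/2)) :=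
    Real.summable_one_div_nat_rpow.mpr (by norm_num)
  have h2 : Summable (fun j : ℕ => 1 / (((j:ℕ)+1:ℕ):ℝ) ^ ((3:ℝ)/2)) :=
    (summable_nat_add_iff 1).mpr h
  refine h2.congr fun j => ?_
  have hj : (0:ℝ) ≤ (j:ℝ) + 1 := by positivity
  rw [show ((((j:ℕ)+1:ℕ)):ℝ) = (j:ℝ)+1 by push_cast; ring]
  rw [show ((3:ℝ)/2) = 1/2 + 1 by norm_num, Real.rpow_add (by positivity),
    Real.rpow_one, ← Real.sqrt_eq_rpow]

lemma sqrt_np1_pos (n : ℕ) : 0 < Real.sqrt ((n:ℝ)+1) :=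
  Real.sqrt_pos.mpr (by positivity)

lemma abs_term_le (k n j : ℕ) (h : n ≤ k) :
    |1 / (Real.sqrt ((n:ℝ)+1) * Real.sqrt ((k:ℝ)+1+(j:ℝ)+1) * ((n:ℝ) - ((k:ℝ)+1+(j:ℝ))))|
      ≤ 1 / (Real.sqrt ((j:ℝ)+1) * ((j:ℝ)+1)) := by
  have hkj : (n:ℝ) - ((k:ℝ)+1+(j:ℝ)) < 0 := by
    have : (n:ℝ) ≤ (k:ℝ) := by exact_mod_cast h
    linarith
  rw [abs_div, abs_one, div_le_div_iff₀ (by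
      have h1 := sqrt_np1_pos n
      have h2 : 0 < Real.sqrt ((k:ℝ)+1+(j:ℝ)+1) := Real.sqrt_pos.mpr (by positivity)
      rw [abs_mul, abs_mul]
      have : |(n:ℝ) - ((k:ℝ)+1+(j:ℝ))| > 0 := abs_pos.mpr (by linarith)
      positivity) (by positivity)]
  rw [one_mul]
  have h1 : (1:ℝ) ≤ Real.sqrt ((n:ℝ)+1) := by
    rw [show ((n:ℝ)+1) = ((n:ℝ)+1) from rfl]
    nlinarith [Real.sq_sqrt (show (0:ℝ) ≤ (n:ℝ)+1 by positivity),
      Real.sqrt_nonneg ((n:ℝ)+1), Nat.cast_nonneg (α := ℝ) n]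
  have h2 : Real.sqrt ((j:ℝ)+1) ≤ Real.sqrt ((k:ℝ)+1+(j:ℝ)+1) := by
    apply Real.sqrt_le_sqrt
    have : (0:ℝ) ≤ (k:ℝ) := Nat.cast_nonneg k
    linarith
  have h3 : (j:ℝ)+1 ≤ |(n:ℝ) - ((k:ℝ)+1+(j:ℝ))| := by
    rw [abs_of_neg hkj]
    have : (n:ℝ) ≤ (k:ℝ) := by exact_mod_cast h
    linarith
  rw [abs_mul, abs_mul, abs_of_nonneg (Real.sqrt_nonneg _), abs_of_nonneg (Real.sqrt_nonneg _)]
  have key : 1 * (Real.sqrt ((j:ℝ)+1) * ((j:ℝ)+1))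
      ≤ Real.sqrt ((n:ℝ)+1) * (Real.sqrt ((k:ℝ)+1+(j:ℝ)+1) * |(n:ℝ) - ((k:ℝ)+1+(j:ℝ))|) := by
    apply mul_le_mul h1 _ (by positivity) (by positivity)
    exact mul_le_mul h2 h3 (by positivity) (Real.sqrt_nonneg _)
  nlinarith [key]

lemma summable_abs_term (k n : ℕ) (h : n ≤ k) :
    Summable (fun j : ℕ =>
      |1 / (Real.sqrt ((n:ℝ)+1) * Real.sqrt ((k:ℝ)+1+(j:ℝ)+1) *
        ((n:ℝ) - ((k:ℝ)+1+(j:ℝ))))|) := by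
  refine Summable.of_nonneg_of_le (fun j => abs_nonneg _) (fun j => abs_term_le k n j h)
    summable_comp

lemma sqrt_lt_of_sq_lt {a y : ℝ} (ha : 0 < a) (hy : a^2 < y) : a < Real.sqrt y := by
  have := Real.sqrt_lt_sqrt (by positivity) hy
  rwa [Real.sqrt_sq ha.le] at this

lemma hasDerivAt_F {a y : ℝ} (ha : 0 < a) (hy : a^2 < y) :
    HasDerivAt (F a) (w (a^2) y) y := by
  have hy0 : 0 < y := lt_trans (by positivity) hy
  have hsy : 0 < Real.sqrt y := Real.sqrt_pos.mpr hy0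
  have hgt : a < Real.sqrt y := sqrt_lt_of_sq_lt ha hy
  have hsub : Real.sqrt y - a ≠ 0 := by linarith
  have hadd : Real.sqrt y + a ≠ 0 := by positivity
  have hsq : HasDerivAt Real.sqrt (1 / (2 * Real.sqrt y)) y := Real.hasDerivAt_sqrt hy0.ne'
  have h1 : HasDerivAt (fun t => Real.log (Real.sqrt t - a))
      ((1 / (2 * Real.sqrt y)) / (Real.sqrt y - a)) y := by
    have := ((hsq.sub_const a).log hsub)
    simpa [div_eq_mul_inv] using this
  have h2 : HasDerivAt (fun t => Real.log (Real.sqrt t + a))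
      ((1 / (2 * Real.sqrt y)) / (Real.sqrt y + a)) y := by
    have := ((hsq.add_const a).log hadd)
    simpa [div_eq_mul_inv] using this
  have h3 := (h1.sub h2).div_const a
  have heq : ((1 / (2 * Real.sqrt y)) / (Real.sqrt y - a)
      - (1 / (2 * Real.sqrt y)) / (Real.sqrt y + a)) / a = w (a^2) y := by
    rw [w]
    set s := Real.sqrt y with hs
    have h4 : s ^ 2 = y := Real.sq_sqrt hy0.le
    rw [← h4]
    have hsne : s ≠ 0 := hsy.ne'
    have h5 : s^2 - a^2 ≠ 0 := by nlinarith
    have h6 : -(s * a ^ 2) + s ^ 3 ≠ 0 := by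
      have he : -(s * a ^ 2) + s ^ 3 = s * (s^2 - a^2) := by ring
      rw [he]; exact mul_ne_zero hsne h5
    field_simp [h6]
    ring
  rw [heq] at h3
  exact h3

lemma antitoneOn_w {x c d : ℝ} (hx0 : 0 ≤ x) (hx : x < c) :
    AntitoneOn (w x) (Set.Icc c d) := by
  intro y1 hy1 y2 hy2 h12
  have hc0 : 0 < c := lt_of_le_of_lt hx0 hx
  have h1 : x < y1 := lt_of_lt_of_le hx hy1.1
  have h2 : x < y2 := lt_of_lt_of_le hx (le_trans hy1.1 h12)
  have hy10 : 0 < y1 := lt_of_le_of_lt hx0 h1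
  have hy20 : 0 < y2 := lt_of_le_of_lt hx0 h2
  rw [w, w]
  apply one_div_le_one_div_of_le
  · have : 0 < Real.sqrt y1 := Real.sqrt_pos.mpr hy10
    have : 0 < y1 - x := by linarith
    positivity
  · apply mul_le_mul (Real.sqrt_le_sqrt h12) (by linarith) (by linarith) (Real.sqrt_nonneg _)

lemma continuousOn_w {x c d : ℝ} (hx0 : 0 ≤ x) (hx : x < c) :
    ContinuousOn (w x) (Set.Icc c d) := by
  apply ContinuousOn.div continuousOn_const
  · exact ContinuousOn.mul (Real.continuous_sqrt.continuousOn)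
      (by fun_prop)
  · intro y hy
    have h1 : x < y := lt_of_lt_of_le hx hy.1
    have hy0 : 0 < y := lt_of_le_of_lt hx0 h1
    have : 0 < Real.sqrt y := Real.sqrt_pos.mpr hy0
    have : 0 < y - x := by linarith
    positivity

lemma integral_w {a : ℝ} (ha : 0 < a) {c d : ℝ} (hc : a^2 < c) (hcd : c ≤ d) :
    ∫ y in c..d, w (a^2) y = F a d - F a c := by
  apply intervalIntegral.integral_eq_sub_of_hasDerivAt
  · intro y hy
    rw [Set.uIcc_of_le hcd] at hy
    exact hasDerivAt_F ha (lt_of_lt_of_le hc hy.1)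
  · apply ContinuousOn.intervalIntegrable
    rw [Set.uIcc_of_le hcd]
    exact continuousOn_w (by positivity) hc

lemma F_nonpos {a y : ℝ} (ha : 0 < a) (hy : a^2 < y) : F a y ≤ 0 := by
  have hgt : a < Real.sqrt y := sqrt_lt_of_sq_lt ha hy
  rw [F]
  apply div_nonpos_of_nonpos_of_nonneg _ ha.le
  rw [sub_nonpos]
  apply Real.log_le_log (by linarith)
  linarith

lemma tendsto_F {a c : ℝ} (ha : 0 < a) (hc : 0 < c) :
    Tendsto (fun N : ℕ => F a (c + N)) atTop (nhds 0) := by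
  have hsq : Tendsto (fun N : ℕ => Real.sqrt (c + N)) atTop atTop := by
    have hr : Tendsto (fun x:ℝ => x ^ ((1:ℝ)/2)) atTop atTop := tendsto_rpow_atTop (by norm_num)
    have hs : Tendsto Real.sqrt atTop atTop :=
      hr.congr' (by filter_upwards with x using (Real.sqrt_eq_rpow x).symm)
    apply hs.comp
    apply tendsto_atTop_add_const_left
    exact tendsto_natCast_atTop_atTop
  have hratio : Tendsto (fun N : ℕ =>
      (Real.sqrt (c + N) - a) / (Real.sqrt (c + N) + a)) atTop (nhds 1) := by
    have h2 : Tendsto (fun N : ℕ => 1 - 2*a / (Real.sqrt (c + N) + a)) atTop (nhds 1) := by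
      have := Tendsto.div_atTop (tendsto_const_nhds (x := 2*a))
        (tendsto_atTop_add_const_right _ a hsq)
      simpa using (tendsto_const_nhds (x := (1:ℝ))).sub this
    apply h2.congr'
    filter_upwards [hsq.eventually_ge_atTop (a+1)] with N hN
    have hden : Real.sqrt (c + N) + a > 0 := by linarith
    field_simp
    ring
  have hlog : Tendsto (fun N : ℕ =>
      Real.log ((Real.sqrt (c + N) - a) / (Real.sqrt (c + N) + a))) atTop (nhds 0) := by
    have := (Real.continuousAt_log one_ne_zero).tendsto.comp hratio
    simpa [Function.comp_def] using this
  have : Tendsto (fun N : ℕ =>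
      Real.log ((Real.sqrt (c + N) - a) / (Real.sqrt (c + N) + a)) / a) atTop (nhds 0) := by
    simpa using hlog.div_const a
  apply this.congr'
  filter_upwards [hsq.eventually_ge_atTop (a+1)] with N hN
  rw [F, Real.log_div (by linarith) (by linarith)]

def T (k n : ℕ) : ℝ := ∑' j : ℕ, w ((n:ℝ)+1) ((k:ℝ)+2+(j:ℝ))

lemma w_val (k n j : ℕ) : w ((n:ℝ)+1) ((k:ℝ)+2+(j:ℝ))
    = 1 / (Real.sqrt ((k:ℝ)+2+(j:ℝ)) * ((k:ℝ)+1+(j:ℝ) - (n:ℝ))) := by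
  rw [w]; ring_nf

lemma w_nonneg (k n j : ℕ) (h : n ≤ k) : 0 ≤ w ((n:ℝ)+1) ((k:ℝ)+2+(j:ℝ)) := by
  rw [w_val]
  have hn : (n:ℝ) ≤ (k:ℝ) := by exact_mod_cast h
  have h1 : 0 < Real.sqrt ((k:ℝ)+2+(j:ℝ)) := Real.sqrt_pos.mpr (by positivity)
  have h2 : (0:ℝ) < (k:ℝ)+1+(j:ℝ) - (n:ℝ) := by
    have : (0:ℝ) ≤ (j:ℝ) := Nat.cast_nonneg j
    linarith
  positivity

lemma w_eq_sqrt_mul_abs (k n j : ℕ) (h : n ≤ k) :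
    w ((n:ℝ)+1) ((k:ℝ)+2+(j:ℝ)) = Real.sqrt ((n:ℝ)+1) *
      |1 / (Real.sqrt ((n:ℝ)+1) * Real.sqrt ((k:ℝ)+1+(j:ℝ)+1) *
        ((n:ℝ) - ((k:ℝ)+1+(j:ℝ))))| := by
  have hn : (n:ℝ) ≤ (k:ℝ) := by exact_mod_cast h
  have hj : (0:ℝ) ≤ (j:ℝ) := Nat.cast_nonneg j
  have ha : 0 < Real.sqrt ((n:ℝ)+1) := sqrt_np1_pos n
  have hb : 0 < Real.sqrt ((k:ℝ)+1+(j:ℝ)+1) := Real.sqrt_pos.mpr (by positivity)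
  have hc : (n:ℝ) - ((k:ℝ)+1+(j:ℝ)) < 0 := by linarith
  have hq : 1 / (Real.sqrt ((n:ℝ)+1) * Real.sqrt ((k:ℝ)+1+(j:ℝ)+1) *
      ((n:ℝ) - ((k:ℝ)+1+(j:ℝ)))) < 0 :=
    div_neg_of_pos_of_neg one_pos (mul_neg_of_pos_of_neg (by positivity) hc)
  rw [w_val, abs_of_neg hq]
  have hd : (0:ℝ) < (k:ℝ)+1+(j:ℝ) - (n:ℝ) := by linarith
  have he : (k:ℝ)+1+(j:ℝ)+1 = (k:ℝ)+2+(j:ℝ) := by ring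
  rw [he] at hb
  rw [show Real.sqrt ((k:ℝ)+1+(j:ℝ)+1) = Real.sqrt ((k:ℝ)+2+(j:ℝ)) by rw [he]]
  rw [show (n:ℝ) - ((k:ℝ)+1+(j:ℝ)) = -(((k:ℝ)+1+(j:ℝ)) - (n:ℝ)) by ring]
  set A := Real.sqrt ((n:ℝ)+1) with hA
  set B := Real.sqrt ((k:ℝ)+2+(j:ℝ)) with hB
  set D := (k:ℝ)+1+(j:ℝ)-(n:ℝ) with hDd
  have hane := ha.ne'
  have hbne := hb.ne'
  have hdne := hd.ne'
  field_simp

lemma summable_w (k n : ℕ) (h : n ≤ k) :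
    Summable (fun j : ℕ => w ((n:ℝ)+1) ((k:ℝ)+2+(j:ℝ))) := by
  have := (summable_abs_term k n h).mul_left (Real.sqrt ((n:ℝ)+1))
  exact this.congr fun j => (w_eq_sqrt_mul_abs k n j h).symm

lemma T_le {k n : ℕ} (h : n < k) :
    T k n ≤ -F (Real.sqrt ((n:ℝ)+1)) ((k:ℝ)+1) := by
  set a := Real.sqrt ((n:ℝ)+1) with ha_def
  have ha : 0 < a := sqrt_np1_pos n
  have ha2 : a^2 = (n:ℝ)+1 := Real.sq_sqrt (by positivity)
  have hnk : (n:ℝ)+1 < (k:ℝ)+1 := by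
    have : (n:ℝ) < (k:ℝ) := by exact_mod_cast h
    linarith
  apply Real.tsum_le_of_sum_range_le (fun j => w_nonneg k n j h.le)
  intro N
  have hanti : AntitoneOn (w ((n:ℝ)+1)) (Set.Icc ((k:ℝ)+1) ((k:ℝ)+1+(N:ℕ))) :=
    antitoneOn_w (by positivity) hnk
  have hsum := hanti.sum_le_integral
  have heq : ∀ i ∈ range N, w ((n:ℝ)+1) ((k:ℝ)+1 + ((i+1:ℕ):ℝ))
      = w ((n:ℝ)+1) ((k:ℝ)+2+(i:ℝ)) := by
    intro i _
    congr 1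
    push_cast
    ring
  rw [Finset.sum_congr rfl heq] at hsum
  refine le_trans hsum ?_
  have hint : ∫ y in ((k:ℝ)+1)..((k:ℝ)+1+(N:ℕ)), w ((n:ℝ)+1) y
      = F a ((k:ℝ)+1+(N:ℕ)) - F a ((k:ℝ)+1) := by
    rw [← ha2]
    apply integral_w ha (by rw [ha2]; exact hnk)
    have : (0:ℝ) ≤ (N:ℕ) := Nat.cast_nonneg N
    linarith
  rw [hint]
  have hF : F a ((k:ℝ)+1+(N:ℕ)) ≤ 0 := by
    apply F_nonpos ha
    rw [ha2]
    have : (0:ℝ) ≤ (N:ℕ) := Nat.cast_nonneg N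
    linarith
  linarith

lemma le_T {k n : ℕ} (h : n ≤ k) :
    -F (Real.sqrt ((n:ℝ)+1)) ((k:ℝ)+2) ≤ T k n := by
  set a := Real.sqrt ((n:ℝ)+1) with ha_def
  have ha : 0 < a := sqrt_np1_pos n
  have ha2 : a^2 = (n:ℝ)+1 := Real.sq_sqrt (by positivity)
  have hnk : (n:ℝ)+1 < (k:ℝ)+2 := by
    have : (n:ℝ) ≤ (k:ℝ) := by exact_mod_cast h
    linarith
  have hsum := (summable_w k n h).hasSum.tendsto_sum_nat
  have hlb : ∀ N : ℕ, F a ((k:ℝ)+2+(N:ℕ)) - F a ((k:ℝ)+2)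
      ≤ ∑ j ∈ range N, w ((n:ℝ)+1) ((k:ℝ)+2+(j:ℝ)) := by
    intro N
    have hanti : AntitoneOn (w ((n:ℝ)+1)) (Set.Icc ((k:ℝ)+2) ((k:ℝ)+2+(N:ℕ))) :=
      antitoneOn_w (by positivity) hnk
    have hint := hanti.integral_le_sum
    have heq : ∀ i ∈ range N, w ((n:ℝ)+1) ((k:ℝ)+2 + (i:ℕ))
        = w ((n:ℝ)+1) ((k:ℝ)+2+(i:ℝ)) := by
      intro i _; norm_num
    rw [Finset.sum_congr rfl heq] at hint
    refine le_trans (le_of_eq ?_) hint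
    rw [← ha2]
    symm
    apply integral_w ha (by rw [ha2]; exact hnk)
    have : (0:ℝ) ≤ (N:ℕ) := Nat.cast_nonneg N
    linarith
  have hFl : Tendsto (fun N : ℕ => F a ((k:ℝ)+2+(N:ℕ)) - F a ((k:ℝ)+2)) atTop
      (nhds (0 - F a ((k:ℝ)+2))) := by
    exact (tendsto_F ha (by positivity)).sub_const _
  rw [zero_sub] at hFl
  exact le_of_tendsto_of_tendsto' hFl hsum hlb

lemma neg_F_eq {a c : ℝ} (ha : 0 < a) (hc : a^2 < c) :
    -F a c = Lam (a / Real.sqrt c) / a := by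
  have hc0 : 0 < c := lt_trans (by positivity) hc
  have hsc : 0 < Real.sqrt c := Real.sqrt_pos.mpr hc0
  have hgt : a < Real.sqrt c := sqrt_lt_of_sq_lt ha hc
  rw [F, Lam]
  have h1 : 1 + a / Real.sqrt c = (Real.sqrt c + a)/Real.sqrt c := by field_simp
  have h2 : 1 - a / Real.sqrt c = (Real.sqrt c - a)/Real.sqrt c := by field_simp
  rw [h1, h2, Real.log_div (by positivity) hsc.ne', Real.log_div (by linarith) hsc.ne']
  ring

lemma term_le {k n : ℕ} (h : n < k) :
    (1/Real.sqrt ((n:ℝ)+1)) * T k n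
      ≤ Lam (Real.sqrt ((n:ℝ)+1) / Real.sqrt ((k:ℝ)+1)) / ((n:ℝ)+1) := by
  set a := Real.sqrt ((n:ℝ)+1) with ha_def
  have ha : 0 < a := sqrt_np1_pos n
  have ha2 : a^2 = (n:ℝ)+1 := Real.sq_sqrt (by positivity)
  have hc : a^2 < (k:ℝ)+1 := by
    rw [ha2]
    have : (n:ℝ) < (k:ℝ) := by exact_mod_cast h
    linarith
  have h1 : (1/a) * T k n ≤ (1/a) * (-F a ((k:ℝ)+1)) := by
    apply mul_le_mul_of_nonneg_left (T_le h) (by positivity)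
  refine le_trans h1 (le_of_eq ?_)
  rw [neg_F_eq ha hc, ← ha2, one_div_mul_eq_div, div_div, ← sq]

lemma le_term {k n : ℕ} (h : n ≤ k) :
    Lam (Real.sqrt ((n:ℝ)+1) / Real.sqrt ((k:ℝ)+2)) / ((n:ℝ)+1)
      ≤ (1/Real.sqrt ((n:ℝ)+1)) * T k n := by
  set a := Real.sqrt ((n:ℝ)+1) with ha_def
  have ha : 0 < a := sqrt_np1_pos n
  have ha2 : a^2 = (n:ℝ)+1 := Real.sq_sqrt (by positivity)
  have hc : a^2 < (k:ℝ)+2 := by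
    rw [ha2]
    have : (n:ℝ) ≤ (k:ℝ) := by exact_mod_cast h
    linarith
  have h1 : (1/a) * (-F a ((k:ℝ)+2)) ≤ (1/a) * T k n := by
    apply mul_le_mul_of_nonneg_left (le_T h) (by positivity)
  refine le_trans (le_of_eq ?_) h1
  rw [neg_F_eq ha hc, ← ha2, one_div_mul_eq_div, div_div, ← sq]

def Cst : ℝ := ∑' j : ℕ, 1 / (Real.sqrt ((j:ℝ)+1) * ((j:ℝ)+1))

lemma T_kk_le (k : ℕ) : T k k ≤ Cst := by
  apply Summable.tsum_le_tsum _ (summable_w k k le_rfl) summable_comp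
  intro j
  rw [w_val]
  have hj : (0:ℝ) ≤ (j:ℝ) := Nat.cast_nonneg j
  have hk : (0:ℝ) ≤ (k:ℝ) := Nat.cast_nonneg k
  rw [show (k:ℝ)+1+(j:ℝ)-(k:ℝ) = (j:ℝ)+1 by ring]
  apply one_div_le_one_div_of_le (by positivity)
  apply mul_le_mul_of_nonneg_right _ (by linarith)
  apply Real.sqrt_le_sqrt
  linarith

lemma rpow_np1 (s n : ℕ) :
    ((n:ℝ)+1) ^ ((s:ℝ) - 1/2) = ((n:ℝ)+1)^s / Real.sqrt ((n:ℝ)+1) := by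
  have h : (0:ℝ) < (n:ℝ)+1 := by positivity
  rw [Real.rpow_sub h, Real.rpow_natCast, Real.sqrt_eq_rpow]

lemma rpow_split (s : ℕ) {x : ℝ} (hx : 0 ≤ x) :
    x ^ ((s:ℝ) + 1/2) = x^s * Real.sqrt x := by
  rcases eq_or_lt_of_le hx with h | h
  · rw [← h, Real.zero_rpow (by positivity), Real.sqrt_zero, mul_zero]
  · rw [Real.rpow_add h, Real.rpow_natCast, Real.sqrt_eq_rpow]

/-- s = 0 upper bound, by induction -/
lemma sum0UB (K : ℕ) : ∑ n ∈ range K, 1 / Real.sqrt ((n:ℝ)+1) ≤ 2 * Real.sqrt (K:ℝ) := by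
  induction K with
  | zero => simp
  | succ K ih =>
    rw [Finset.sum_range_succ]
    have hb : 0 < Real.sqrt ((K:ℝ)+1) := Real.sqrt_pos.mpr (by positivity)
    have h1 : 1 / Real.sqrt ((K:ℝ)+1) ≤ 2 * Real.sqrt ((K:ℝ)+1) - 2 * Real.sqrt (K:ℝ) := by
      rw [div_le_iff₀ hb]
      nlinarith [sq_nonneg (Real.sqrt ((K:ℝ)+1) - Real.sqrt (K:ℝ)),
        Real.sq_sqrt (show (0:ℝ) ≤ (K:ℝ) by positivity),
        Real.sq_sqrt (show (0:ℝ) ≤ (K:ℝ)+1 by positivity),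
        Real.sqrt_nonneg (K:ℝ), Real.sqrt_nonneg ((K:ℝ)+1)]
    have hcast : Real.sqrt ((K+1:ℕ):ℝ) = Real.sqrt ((K:ℝ)+1) := by push_cast; ring_nf
    rw [hcast]
    linarith

/-- s = 0 lower bound, by induction -/
lemma sum0LB (K : ℕ) : 2 * Real.sqrt ((K:ℝ)+1) - 2 ≤ ∑ n ∈ range K, 1 / Real.sqrt ((n:ℝ)+1) := by
  induction K with
  | zero => simp
  | succ K ih =>
    rw [Finset.sum_range_succ]
    have hb : 0 < Real.sqrt ((K:ℝ)+1) := Real.sqrt_pos.mpr (by positivity)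
    have hb2 : 0 < Real.sqrt ((K:ℝ)+2) := Real.sqrt_pos.mpr (by positivity)
    have h1 : 2 * Real.sqrt ((K:ℝ)+2) - 2 * Real.sqrt ((K:ℝ)+1) ≤ 1 / Real.sqrt ((K:ℝ)+1) := by
      rw [le_div_iff₀ hb]
      nlinarith [sq_nonneg (Real.sqrt ((K:ℝ)+2) - Real.sqrt ((K:ℝ)+1)),
        Real.sq_sqrt (show (0:ℝ) ≤ (K:ℝ)+1 by positivity),
        Real.sq_sqrt (show (0:ℝ) ≤ (K:ℝ)+2 by positivity),
        Real.sqrt_nonneg ((K:ℝ)+1), Real.sqrt_nonneg ((K:ℝ)+2)]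
    push_cast
    rw [show (K:ℝ)+1+1 = (K:ℝ)+2 by ring]
    linarith

lemma monotoneOn_rpow (p : ℝ) (hp : 0 ≤ p) (c d : ℝ) (hc : 0 ≤ c) :
    MonotoneOn (fun x : ℝ => x ^ p) (Set.Icc c d) := by
  intro x hx y hy hxy
  exact Real.rpow_le_rpow (le_trans hc hx.1) hxy hp

/-- s ≥ 1 (as s+1) upper bound via integral comparison -/
lemma sumUB1 (s K : ℕ) :
    ∑ n ∈ range K, ((n:ℝ)+1)^(s+1) / Real.sqrt ((n:ℝ)+1)
      ≤ 2/(2*((s:ℝ)+1)+1) * (((K:ℝ)+1)^(s+1) * Real.sqrt ((K:ℝ)+1)) := by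
  set p : ℝ := ((s+1:ℕ):ℝ) - 1/2 with hp_def
  have hp : 0 ≤ p := by rw [hp_def]; push_cast; linarith
  have hmono : MonotoneOn (fun x : ℝ => x ^ p) (Set.Icc (1:ℝ) (1 + (K:ℕ))) :=
    monotoneOn_rpow p hp 1 _ (by norm_num)
  have key := hmono.sum_le_integral
  have hL : ∀ i ∈ range K, ((1:ℝ) + (i:ℕ)) ^ p = ((i:ℝ)+1)^(s+1) / Real.sqrt ((i:ℝ)+1) := by
    intro i _
    rw [show ((1:ℝ) + (i:ℕ)) = ((i:ℝ)+1) by push_cast; ring, hp_def]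
    rw [show (((s+1:ℕ)):ℝ) = (((s+1:ℕ)):ℝ) from rfl]
    have := rpow_np1 (s+1) i
    push_cast at this ⊢
    exact this
  rw [Finset.sum_congr rfl hL] at key
  refine le_trans key ?_
  have hint : ∫ x in (1:ℝ)..(1 + (K:ℕ)), x ^ p = ((1+(K:ℝ)) ^ (p+1) - 1 ^ (p+1)) / (p+1) := by
    apply integral_rpow
    left
    rw [hp_def]; push_cast; linarith
  rw [hint]
  have hp1 : p + 1 = ((s+1:ℕ):ℝ) + 1/2 := by rw [hp_def]; ring
  have h1p : (1:ℝ) ^ (p+1) = 1 := Real.one_rpow _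
  rw [h1p, hp1]
  rw [show (1:ℝ) + ((K:ℕ):ℝ) = (K:ℝ)+1 by push_cast; ring]
  rw [rpow_split (s+1) (show (0:ℝ) ≤ (K:ℝ)+1 by positivity)]
  have hpos : (0:ℝ) < ((s+1:ℕ):ℝ) + 1/2 := by positivity
  have hq : 2/(2*((s:ℝ)+1)+1) = 1/(((s+1:ℕ):ℝ) + 1/2) := by
    push_cast
    rw [div_eq_div_iff (by positivity) (by positivity)]
    ring
  rw [hq, one_div_mul_eq_div]
  gcongr
  linarith [pow_nonneg (show (0:ℝ) ≤ (K:ℝ)+1 by positivity) (s+1),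
    Real.sqrt_nonneg ((K:ℝ)+1)]

/-- s ≥ 1 (as s+1) lower bound via integral comparison -/
lemma sumLB1 (s K : ℕ) :
    2/(2*((s:ℝ)+1)+1) * ((K:ℝ)^(s+1) * Real.sqrt (K:ℝ))
      ≤ ∑ n ∈ range K, ((n:ℝ)+1)^(s+1) / Real.sqrt ((n:ℝ)+1) := by
  set p : ℝ := ((s+1:ℕ):ℝ) - 1/2 with hp_def
  have hp : 0 ≤ p := by rw [hp_def]; push_cast; linarith
  have hmono : MonotoneOn (fun x : ℝ => x ^ p) (Set.Icc (0:ℝ) (0 + (K:ℕ))) :=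
    monotoneOn_rpow p hp 0 _ le_rfl
  have key := hmono.integral_le_sum
  have hL : ∀ i ∈ range K, ((0:ℝ) + ((i+1:ℕ):ℝ)) ^ p = ((i:ℝ)+1)^(s+1) / Real.sqrt ((i:ℝ)+1) := by
    intro i _
    rw [show ((0:ℝ) + ((i+1:ℕ):ℝ)) = ((i:ℝ)+1) by push_cast; ring, hp_def]
    have := rpow_np1 (s+1) i
    push_cast at this ⊢
    exact this
  rw [Finset.sum_congr rfl hL] at key
  refine le_trans ?_ key
  have hint : ∫ x in (0:ℝ)..(0 + (K:ℕ)), x ^ p = ((0+(K:ℝ)) ^ (p+1) - 0 ^ (p+1)) / (p+1) := by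
    apply integral_rpow
    left
    rw [hp_def]; push_cast; linarith
  rw [hint]
  have hp1 : p + 1 = ((s+1:ℕ):ℝ) + 1/2 := by rw [hp_def]; ring
  have h0p : (0:ℝ) ^ (p+1) = 0 := Real.zero_rpow (by rw [hp1]; positivity)
  rw [h0p, hp1]
  rw [show (0:ℝ) + ((K:ℕ):ℝ) = (K:ℝ) by push_cast; ring]
  rw [rpow_split (s+1) (show (0:ℝ) ≤ (K:ℝ) by positivity)]
  have hq : 2/(2*((s:ℝ)+1)+1) = 1/(((s+1:ℕ):ℝ) + 1/2) := by
    push_cast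
    rw [div_eq_div_iff (by positivity) (by positivity)]
    ring
  rw [hq, one_div_mul_eq_div, sub_zero]

lemma hasSum_inv_sq_odd :
    HasSum (fun s : ℕ => (1:ℝ)/(((2*s+1:ℕ)):ℝ)^2) (Real.pi^2/8) := by
  have h := hasSum_zeta_two
  have heven : HasSum (fun m : ℕ => (1:ℝ)/(((2*m:ℕ)):ℝ)^2) (Real.pi^2/24) := by
    have h2 := h.mul_left (1/4:ℝ)
    have hv : (1/4:ℝ) * (Real.pi^2/6) = Real.pi^2/24 := by ring
    rw [hv] at h2
    have hfun : (fun m : ℕ => (1/4:ℝ) * (1/(m:ℝ)^2)) = fun m : ℕ => (1:ℝ)/(((2*m:ℕ)):ℝ)^2 := by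
      funext m
      push_cast
      rw [mul_pow, one_div, one_div, one_div, mul_inv]
      norm_num
    rwa [hfun] at h2
  have hsum1 : Summable (fun s : ℕ => (1:ℝ)/((s:ℝ)+1)^2) := by
    have := (summable_nat_add_iff 1).mpr h.summable
    refine this.congr fun s => ?_
    push_cast
    norm_num
  have hodd_sum : Summable (fun s : ℕ => (1:ℝ)/(((2*s+1:ℕ)):ℝ)^2) := by
    refine Summable.of_nonneg_of_le (fun s => by positivity) (fun s => ?_) hsum1
    apply one_div_le_one_div_of_le (by positivity)
    push_cast
    nlinarith [sq_nonneg (s:ℝ), Nat.cast_nonneg (α := ℝ) s]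
  have ho := hodd_sum.hasSum
  have htot := HasSum.even_add_odd (f := fun n : ℕ => (1:ℝ)/(n:ℝ)^2) heven ho
  have huniq := h.unique htot
  have : (∑' s : ℕ, (1:ℝ)/(((2*s+1:ℕ)):ℝ)^2) = Real.pi^2/8 := by linarith
  rwa [this] at ho

lemma hasSum_four_div :
    HasSum (fun s : ℕ => (4:ℝ)/(2*(s:ℝ)+1)^2) (Real.pi^2/2) := by
  have h := hasSum_inv_sq_odd.mul_left (4:ℝ)
  have hv : (4:ℝ) * (Real.pi^2/8) = Real.pi^2/2 := by ring
  rw [hv] at h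
  have hfun : (fun s : ℕ => (4:ℝ)/(2*(s:ℝ)+1)^2)
      = fun s : ℕ => 4 * ((1:ℝ)/(((2*s+1:ℕ)):ℝ)^2) := by
    funext s
    push_cast
    ring
  rw [hfun]
  exact h

def e (c : ℝ) (n s : ℕ) : ℝ :=
  2 * (1 / (2 * (s:ℝ) + 1)) * (Real.sqrt ((n:ℝ)+1) / Real.sqrt c) ^ (2 * s + 1) / ((n:ℝ)+1)

lemma hasSum_e {c : ℝ} (n : ℕ) (hc : (n:ℝ)+1 < c) :
    HasSum (fun s : ℕ => e c n s)
      (Lam (Real.sqrt ((n:ℝ)+1) / Real.sqrt c) / ((n:ℝ)+1)) := by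
  have hc0 : (0:ℝ) < c := lt_trans (by positivity) hc
  set u := Real.sqrt ((n:ℝ)+1) / Real.sqrt c with hu
  have hu0 : 0 ≤ u := by positivity
  have hu1 : u < 1 := by
    rw [hu, div_lt_one (Real.sqrt_pos.mpr hc0)]
    exact Real.sqrt_lt_sqrt (by positivity) hc
  have habs : |u| < 1 := by rwa [abs_of_nonneg hu0]
  have h := (Real.hasSum_log_sub_log_of_abs_lt_one habs).div_const ((n:ℝ)+1)
  rw [Lam]
  exact h

def Rk (c : ℝ) (K s : ℕ) : ℝ := ∑ n ∈ range K, e c n s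

lemma e_eq {c : ℝ} (hc : 0 < c) (n s : ℕ) :
    e c n s = 2 / ((2*(s:ℝ)+1) * ((c:ℝ)^s * Real.sqrt c))
      * (((n:ℝ)+1)^s / Real.sqrt ((n:ℝ)+1)) := by
  rw [e, div_pow]
  set A := Real.sqrt ((n:ℝ)+1) with hA
  set B := Real.sqrt c with hB
  have ha : 0 < A := sqrt_np1_pos n
  have hb : 0 < B := Real.sqrt_pos.mpr hc
  have ha2 : A ^ 2 = (n:ℝ)+1 := Real.sq_sqrt (by positivity)
  have hb2 : B ^ 2 = c := Real.sq_sqrt hc.le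
  rw [show A ^ (2*s+1) = ((n:ℝ)+1)^s * A by rw [pow_succ, pow_mul, ha2]]
  rw [show B ^ (2*s+1) = (c:ℝ)^s * B by rw [pow_succ, pow_mul, hb2]]
  have hs1 : (0:ℝ) < 2*(s:ℝ)+1 := by positivity
  have hcs : (0:ℝ) < (c:ℝ)^s := by positivity
  rw [← ha2]
  field_simp

lemma sumUB (s K : ℕ) :
    ∑ n ∈ range K, ((n:ℝ)+1)^s / Real.sqrt ((n:ℝ)+1)
      ≤ 2/(2*(s:ℝ)+1) * (((K:ℝ)+1)^s * Real.sqrt ((K:ℝ)+1)) := by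
  cases s with
  | zero =>
    simp only [pow_zero, Nat.cast_zero, mul_zero, zero_add, one_mul]
    have h1 := sum0UB K
    have h2 : Real.sqrt (K:ℝ) ≤ Real.sqrt ((K:ℝ)+1) := Real.sqrt_le_sqrt (by linarith)
    calc ∑ n ∈ range K, 1 / Real.sqrt ((n:ℝ)+1) ≤ 2 * Real.sqrt (K:ℝ) := h1
      _ ≤ 2/1 * Real.sqrt ((K:ℝ)+1) := by rw [div_one]; linarith
  | succ s =>
    have := sumUB1 s K
    push_cast at this ⊢
    convert this using 2 <;> ring

lemma Rk_nonneg {c : ℝ} (hc : 0 ≤ c) (K s : ℕ) : 0 ≤ Rk c K s := by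
  apply Finset.sum_nonneg
  intro n _
  rw [e]
  have h1 : (0:ℝ) ≤ Real.sqrt ((n:ℝ)+1) / Real.sqrt c := by positivity
  positivity

lemma Rk_le {c : ℝ} (K s : ℕ) (hc : (K:ℝ)+1 ≤ c) : Rk c K s ≤ 4 / (2*(s:ℝ)+1)^2 := by
  have hc0 : (0:ℝ) < c := lt_of_lt_of_le (by positivity) hc
  have hs1 : (0:ℝ) < 2*(s:ℝ)+1 := by positivity
  have hcs : (0:ℝ) < (c:ℝ)^s * Real.sqrt c := by positivity
  have h1 : Rk c K s = 2 / ((2*(s:ℝ)+1) * ((c:ℝ)^s * Real.sqrt c))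
      * ∑ n ∈ range K, (((n:ℝ)+1)^s / Real.sqrt ((n:ℝ)+1)) := by
    rw [Rk, Finset.mul_sum]
    exact Finset.sum_congr rfl fun n _ => e_eq hc0 n s
  rw [h1]
  have h2 : ∑ n ∈ range K, (((n:ℝ)+1)^s / Real.sqrt ((n:ℝ)+1))
      ≤ 2/(2*(s:ℝ)+1) * ((c:ℝ)^s * Real.sqrt c) := by
    refine le_trans (sumUB s K) ?_
    have hk1 : (0:ℝ) ≤ (K:ℝ)+1 := by positivity
    apply mul_le_mul_of_nonneg_left _ (by positivity)
    exact mul_le_mul (pow_le_pow_left₀ hk1 hc s) (Real.sqrt_le_sqrt hc)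
      (Real.sqrt_nonneg _) (by positivity)
  calc 2 / ((2*(s:ℝ)+1) * ((c:ℝ)^s * Real.sqrt c))
        * ∑ n ∈ range K, (((n:ℝ)+1)^s / Real.sqrt ((n:ℝ)+1))
      ≤ 2 / ((2*(s:ℝ)+1) * ((c:ℝ)^s * Real.sqrt c))
        * (2/(2*(s:ℝ)+1) * ((c:ℝ)^s * Real.sqrt c)) := by
        apply mul_le_mul_of_nonneg_left h2 (by positivity)
    _ = 4 / (2*(s:ℝ)+1)^2 := by
        field_simp
        ring

lemma e_eq0 {c : ℝ} (hc : 0 < c) (n : ℕ) :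
    e c n 0 = 2 / Real.sqrt c * (1 / Real.sqrt ((n:ℝ)+1)) := by
  have h := e_eq hc n 0
  simpa using h

lemma Rk_ge0 (k : ℕ) : 4 - 4 / Real.sqrt ((k:ℝ)+2) ≤ Rk ((k:ℝ)+2) (k+1) 0 := by
  have hc0 : (0:ℝ) < (k:ℝ)+2 := by positivity
  have hsc : 0 < Real.sqrt ((k:ℝ)+2) := Real.sqrt_pos.mpr hc0
  have h1 : Rk ((k:ℝ)+2) (k+1) 0
      = 2 / Real.sqrt ((k:ℝ)+2) * ∑ n ∈ range (k+1), (1 / Real.sqrt ((n:ℝ)+1)) := by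
    rw [Rk, Finset.mul_sum]
    exact Finset.sum_congr rfl fun n _ => e_eq0 hc0 n
  rw [h1]
  have h2 : 2 * Real.sqrt ((k:ℝ)+2) - 2 ≤ ∑ n ∈ range (k+1), ((1:ℝ) / Real.sqrt ((n:ℝ)+1)) := by
    have := sum0LB (k+1)
    push_cast at this
    rwa [show (k:ℝ)+1+1 = (k:ℝ)+2 by ring] at this
  calc 4 - 4 / Real.sqrt ((k:ℝ)+2)
      = 2 / Real.sqrt ((k:ℝ)+2) * (2 * Real.sqrt ((k:ℝ)+2) - 2) := by
        field_simp
        ring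
    _ ≤ 2 / Real.sqrt ((k:ℝ)+2) * ∑ n ∈ range (k+1), (1 / Real.sqrt ((n:ℝ)+1)) :=
        mul_le_mul_of_nonneg_left h2 (by positivity)

lemma Rk_ge1 (s k : ℕ) :
    4/(2*((s:ℝ)+1)+1)^2
      * ((((k:ℝ)+1)^(s+1) * Real.sqrt ((k:ℝ)+1)) / ((((k:ℝ)+2))^(s+1) * Real.sqrt ((k:ℝ)+2)))
      ≤ Rk ((k:ℝ)+2) (k+1) (s+1) := by
  have hc0 : (0:ℝ) < (k:ℝ)+2 := by positivity
  have hsc : 0 < Real.sqrt ((k:ℝ)+2) := Real.sqrt_pos.mpr hc0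
  have hs1 : (0:ℝ) < 2*((s:ℝ)+1)+1 := by positivity
  have hcs : (0:ℝ) < ((k:ℝ)+2)^(s+1) * Real.sqrt ((k:ℝ)+2) := by positivity
  have h1 : Rk ((k:ℝ)+2) (k+1) (s+1)
      = 2 / ((2*((s+1:ℕ):ℝ)+1) * (((k:ℝ)+2)^(s+1) * Real.sqrt ((k:ℝ)+2)))
        * ∑ n ∈ range (k+1), (((n:ℝ)+1)^(s+1) / Real.sqrt ((n:ℝ)+1)) := by
    rw [Rk, Finset.mul_sum]
    exact Finset.sum_congr rfl fun n _ => e_eq hc0 n (s+1)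
  rw [h1]
  have h2 : 2/(2*((s:ℝ)+1)+1) * (((k:ℝ)+1)^(s+1) * Real.sqrt ((k:ℝ)+1))
      ≤ ∑ n ∈ range (k+1), (((n:ℝ)+1)^(s+1) / Real.sqrt ((n:ℝ)+1)) := by
    have := sumLB1 s (k+1)
    push_cast at this ⊢
    exact this
  have hcast : (2*((s+1:ℕ):ℝ)+1) = 2*((s:ℝ)+1)+1 := by push_cast; ring
  rw [hcast]
  calc 4/(2*((s:ℝ)+1)+1)^2
      * ((((k:ℝ)+1)^(s+1) * Real.sqrt ((k:ℝ)+1)) / ((((k:ℝ)+2))^(s+1) * Real.sqrt ((k:ℝ)+2)))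
      = 2 / ((2*((s:ℝ)+1)+1) * (((k:ℝ)+2)^(s+1) * Real.sqrt ((k:ℝ)+2)))
        * (2/(2*((s:ℝ)+1)+1) * (((k:ℝ)+1)^(s+1) * Real.sqrt ((k:ℝ)+1))) := by
        field_simp
        ring
    _ ≤ _ := mul_le_mul_of_nonneg_left h2 (by positivity)

lemma tendsto_ratio : Tendsto (fun k : ℕ => ((k:ℝ)+1)/((k:ℝ)+2)) atTop (nhds 1) := by
  have h0 : Tendsto (fun k : ℕ => 1/((k:ℝ)+2)) atTop (nhds 0) := by
    apply Tendsto.div_atTop (tendsto_const_nhds (x := (1:ℝ)))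
    apply tendsto_atTop_add_const_right
    exact tendsto_natCast_atTop_atTop
  have h1 := (tendsto_const_nhds (x := (1:ℝ))).sub h0
  rw [sub_zero] at h1
  apply h1.congr
  intro k
  have : ((k:ℝ)+2) ≠ 0 := by positivity
  field_simp
  ring

lemma tendsto_Rk (s : ℕ) :
    Tendsto (fun k : ℕ => Rk ((k:ℝ)+2) (k+1) s) atTop (nhds (4 / (2*(s:ℝ)+1)^2)) := by
  have hub : ∀ k : ℕ, Rk ((k:ℝ)+2) (k+1) s ≤ 4 / (2*(s:ℝ)+1)^2 := by
    intro k
    apply Rk_le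
    push_cast
    linarith
  cases s with
  | zero =>
    have hlb := Rk_ge0
    have hl : Tendsto (fun k : ℕ => 4 - 4 / Real.sqrt ((k:ℝ)+2)) atTop
        (nhds (4 / (2*((0:ℕ):ℝ)+1)^2)) := by
      have hsq : Tendsto (fun k : ℕ => Real.sqrt ((k:ℝ)+2)) atTop atTop := by
        have hr : Tendsto (fun x:ℝ => x ^ ((1:ℝ)/2)) atTop atTop := tendsto_rpow_atTop (by norm_num)
        have hs2 : Tendsto Real.sqrt atTop atTop :=
          hr.congr' (by filter_upwards with x using (Real.sqrt_eq_rpow x).symm)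
        apply hs2.comp
        apply tendsto_atTop_add_const_right
        exact tendsto_natCast_atTop_atTop
      have h0 := Tendsto.div_atTop (tendsto_const_nhds (x := (4:ℝ))) hsq
      have := (tendsto_const_nhds (x := (4:ℝ))).sub h0
      rw [sub_zero] at this
      convert this using 2
      norm_num
    exact tendsto_of_tendsto_of_tendsto_of_le_of_le hl
      (tendsto_const_nhds (x := 4 / (2*((0:ℕ):ℝ)+1)^2)) hlb hub
  | succ s =>
    have hlb := Rk_ge1 s
    have hcont : Tendsto (fun x : ℝ => x^(s+1) * Real.sqrt x) (nhds 1) (nhds 1) := by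
      have h1 : Tendsto (fun x : ℝ => x^(s+1)) (nhds 1) (nhds 1) := by
        have := (continuous_pow (s+1)).tendsto (1:ℝ)
        rwa [one_pow] at this
      have h2 : Tendsto Real.sqrt (nhds 1) (nhds 1) := by
        have := Real.continuous_sqrt.tendsto (1:ℝ)
        rwa [Real.sqrt_one] at this
      have := h1.mul h2
      rwa [mul_one] at this
    have hD : Tendsto (fun k : ℕ =>
        (((k:ℝ)+1)^(s+1) * Real.sqrt ((k:ℝ)+1)) / ((((k:ℝ)+2))^(s+1) * Real.sqrt ((k:ℝ)+2)))
        atTop (nhds 1) := by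
      have hcomp := hcont.comp tendsto_ratio
      apply hcomp.congr
      intro k
      have hk2 : (0:ℝ) < (k:ℝ)+2 := by positivity
      have hk1 : (0:ℝ) ≤ (k:ℝ)+1 := by positivity
      simp only [Function.comp_apply]
      rw [div_pow, Real.sqrt_div hk1, div_mul_div_comm]
    have hl := hD.const_mul (4/(2*((s:ℝ)+1)+1)^2)
    rw [mul_one] at hl
    rw [show (((s+1:ℕ)):ℝ) = (s:ℝ)+1 by push_cast; ring]
    have hub' : ∀ k : ℕ, Rk ((k:ℝ)+2) (k+1) (s+1) ≤ 4 / (2*((s:ℝ)+1)+1)^2 := by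
      intro k
      have := hub k
      rwa [show (((s+1:ℕ)):ℝ) = (s:ℝ)+1 by push_cast; ring] at this
    exact tendsto_of_tendsto_of_tendsto_of_le_of_le hl
      (tendsto_const_nhds (x := 4 / (2*((s:ℝ)+1)+1)^2)) hlb hub'

lemma sum_eq_tsum {c : ℝ} (K : ℕ) (hc : ∀ n, n < K → (n:ℝ)+1 < c) :
    ∑ n ∈ range K, Lam (Real.sqrt ((n:ℝ)+1) / Real.sqrt c) / ((n:ℝ)+1)
      = ∑' s : ℕ, Rk c K s := by
  have h1 : ∀ n ∈ range K, Lam (Real.sqrt ((n:ℝ)+1) / Real.sqrt c) / ((n:ℝ)+1)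
      = ∑' s : ℕ, e c n s := fun n hn =>
    (hasSum_e n (hc n (Finset.mem_range.mp hn))).tsum_eq.symm
  rw [Finset.sum_congr rfl h1]
  rw [← Summable.tsum_finsetSum (fun n hn => (hasSum_e n (hc n (Finset.mem_range.mp hn))).summable)]
  simp only [Rk]

lemma U_le (k : ℕ) :
    ∑ n ∈ range k, Lam (Real.sqrt ((n:ℝ)+1) / Real.sqrt ((k:ℝ)+1)) / ((n:ℝ)+1)
      ≤ Real.pi^2/2 := by
  rw [sum_eq_tsum k (fun n hn => by
    have : (n:ℝ) < (k:ℝ) := by exact_mod_cast hn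
    linarith)]
  have hsummable : Summable (fun s : ℕ => Rk ((k:ℝ)+1) k s) :=
    Summable.of_nonneg_of_le (fun s => Rk_nonneg (by positivity) k s)
      (fun s => Rk_le k s le_rfl) hasSum_four_div.summable
  have h := Summable.tsum_le_tsum (fun s => Rk_le k s le_rfl) hsummable hasSum_four_div.summable
  rwa [hasSum_four_div.tsum_eq] at h

lemma tendsto_G : Tendsto (fun k : ℕ =>
    ∑ n ∈ range (k+1), Lam (Real.sqrt ((n:ℝ)+1) / Real.sqrt ((k:ℝ)+2)) / ((n:ℝ)+1))
    atTop (nhds (Real.pi^2/2)) := by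
  have hdc := tendsto_tsum_of_dominated_convergence
    (f := fun (k : ℕ) (s : ℕ) => Rk ((k:ℝ)+2) (k+1) s)
    (bound := fun s : ℕ => 4/(2*(s:ℝ)+1)^2)
    hasSum_four_div.summable tendsto_Rk ?_
  · rw [hasSum_four_div.tsum_eq] at hdc
    apply hdc.congr
    intro k
    symm
    apply sum_eq_tsum (k+1)
    intro n hn
    have : (n:ℝ) < (k:ℝ)+1 := by exact_mod_cast hn
    linarith
  · filter_upwards with k
    intro s
    rw [Real.norm_eq_abs, abs_of_nonneg (Rk_nonneg (by positivity) (k+1) s)]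
    apply Rk_le
    push_cast
    linarith

def A (k : ℕ) : ℝ := ∑ n ∈ range (k+1), (1/Real.sqrt ((n:ℝ)+1)) * T k n

lemma A_upper (k : ℕ) : A k ≤ Real.pi^2/2 + Cst / Real.sqrt ((k:ℝ)+1) := by
  rw [A, Finset.sum_range_succ]
  have h1 : ∑ n ∈ range k, (1/Real.sqrt ((n:ℝ)+1)) * T k n
      ≤ ∑ n ∈ range k, Lam (Real.sqrt ((n:ℝ)+1) / Real.sqrt ((k:ℝ)+1)) / ((n:ℝ)+1) :=
    Finset.sum_le_sum (fun n hn => term_le (Finset.mem_range.mp hn))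
  have h2 := U_le k
  have h3 : (1/Real.sqrt ((k:ℝ)+1)) * T k k ≤ Cst / Real.sqrt ((k:ℝ)+1) := by
    rw [one_div_mul_eq_div]
    exact div_le_div_of_nonneg_right (T_kk_le k) (Real.sqrt_nonneg _)
  linarith

lemma A_lower (k : ℕ) :
    ∑ n ∈ range (k+1), Lam (Real.sqrt ((n:ℝ)+1) / Real.sqrt ((k:ℝ)+2)) / ((n:ℝ)+1) ≤ A k :=
  Finset.sum_le_sum fun n hn => le_term (Nat.lt_succ_iff.mp (Finset.mem_range.mp hn))

lemma tendsto_upper : Tendsto (fun k : ℕ => Real.pi^2/2 + Cst / Real.sqrt ((k:ℝ)+1))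
    atTop (nhds (Real.pi^2/2)) := by
  have hsq : Tendsto (fun k : ℕ => Real.sqrt ((k:ℝ)+1)) atTop atTop := by
    have hr : Tendsto (fun x:ℝ => x ^ ((1:ℝ)/2)) atTop atTop := tendsto_rpow_atTop (by norm_num)
    have hs2 : Tendsto Real.sqrt atTop atTop :=
      hr.congr' (by filter_upwards with x using (Real.sqrt_eq_rpow x).symm)
    apply hs2.comp
    apply tendsto_atTop_add_const_right
    exact tendsto_natCast_atTop_atTop
  have h0 := Tendsto.div_atTop (tendsto_const_nhds (x := Cst)) hsq
  have := (tendsto_const_nhds (x := Real.pi^2/2)).add h0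
  rwa [add_zero] at this

lemma tendsto_A : Tendsto A atTop (nhds (Real.pi^2/2)) :=
  tendsto_of_tendsto_of_tendsto_of_le_of_le tendsto_G tendsto_upper A_lower A_upper

lemma term_eq (k n j : ℕ) (h : n ≤ k) :
    1 / (Real.sqrt ((n:ℝ)+1) * Real.sqrt ((k:ℝ)+1+(j:ℝ)+1) * ((n:ℝ) - ((k:ℝ)+1+(j:ℝ))))
      = (-(1/Real.sqrt ((n:ℝ)+1))) * w ((n:ℝ)+1) ((k:ℝ)+2+(j:ℝ)) := by
  have hn : (n:ℝ) ≤ (k:ℝ) := by exact_mod_cast h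
  have hj : (0:ℝ) ≤ (j:ℝ) := Nat.cast_nonneg j
  have ha : 0 < Real.sqrt ((n:ℝ)+1) := sqrt_np1_pos n
  have hb : 0 < Real.sqrt ((k:ℝ)+1+(j:ℝ)+1) := Real.sqrt_pos.mpr (by positivity)
  have hc : (n:ℝ) - ((k:ℝ)+1+(j:ℝ)) < 0 := by linarith
  have ht : 1 / (Real.sqrt ((n:ℝ)+1) * Real.sqrt ((k:ℝ)+1+(j:ℝ)+1) *
      ((n:ℝ) - ((k:ℝ)+1+(j:ℝ)))) < 0 :=
    div_neg_of_pos_of_neg one_pos (mul_neg_of_pos_of_neg (by positivity) hc)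
  rw [w_eq_sqrt_mul_abs k n j h, abs_of_neg ht]
  set t := 1 / (Real.sqrt ((n:ℝ)+1) * Real.sqrt ((k:ℝ)+1+(j:ℝ)+1) *
      ((n:ℝ) - ((k:ℝ)+1+(j:ℝ)))) with htdef
  rw [show (-(1/Real.sqrt ((n:ℝ)+1))) * (Real.sqrt ((n:ℝ)+1) * -t)
      = (1/Real.sqrt ((n:ℝ)+1) * Real.sqrt ((n:ℝ)+1)) * t by ring]
  rw [one_div_mul_cancel ha.ne', one_mul]

lemma S_eq_neg_A (k : ℕ) :
    (∑ n ∈ Finset.range (k+1),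
      ∑' j : ℕ, 1 / (Real.sqrt ((n:ℝ)+1) * Real.sqrt ((k:ℝ)+1+(j:ℝ)+1) *
        ((n:ℝ) - ((k:ℝ)+1+(j:ℝ))))) = -(A k) := by
  rw [A, ← Finset.sum_neg_distrib]
  apply Finset.sum_congr rfl
  intro n hn
  have hnk : n ≤ k := Nat.lt_succ_iff.mp (Finset.mem_range.mp hn)
  have h1 : ∀ j : ℕ, 1 / (Real.sqrt ((n:ℝ)+1) * Real.sqrt ((k:ℝ)+1+(j:ℝ)+1) *
      ((n:ℝ) - ((k:ℝ)+1+(j:ℝ))))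
      = (-(1/Real.sqrt ((n:ℝ)+1))) * w ((n:ℝ)+1) ((k:ℝ)+2+(j:ℝ)) :=
    fun j => term_eq k n j hnk
  rw [tsum_congr h1, tsum_mul_left, T]
  ring

end
end Stmt19


/-- The limit `lim_{k→∞} ∑_{n=0}^k ∑_{m=k+1}^∞ 1/(√(n+1)·√(m+1)·(n-m))` exists and equals
`-π²/2`; for each fixed `k` and `n ≤ k` the inner series over `m = k+1+j`, `j ≥ 0`,
converges absolutely. -/
theorem stmt19 :
    (∀ k n : ℕ, n ≤ k →
      Summable (fun j : ℕ =>
        |1 / (Real.sqrt ((n:ℝ)+1) * Real.sqrt ((k:ℝ)+1+(j:ℝ)+1) *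
          ((n:ℝ) - ((k:ℝ)+1+(j:ℝ))))|)) ∧
    Filter.Tendsto (fun k : ℕ =>
        ∑ n ∈ Finset.range (k+1),
          ∑' j : ℕ, 1 / (Real.sqrt ((n:ℝ)+1) * Real.sqrt ((k:ℝ)+1+(j:ℝ)+1) *
            ((n:ℝ) - ((k:ℝ)+1+(j:ℝ)))))
      Filter.atTop (nhds (-(Real.pi^2/2))) := by
  constructor
  · exact fun k n h => Stmt19.summable_abs_term k n h
  · have key := Stmt19.tendsto_A.neg
    apply key.congr
    intro k
    exact (Stmt19.S_eq_neg_A k).symm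
end
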